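/- Under UP with a given set P of measurement paths, suppose Δ = min over non-monitors v ∈ N of MSC(v) is finite (i.e., some P_v admits a cover by other non-monitors' path sets). Then the maximum identifiability of G under UP satisfies Δ − 1 ≤ Ω_UP(G) ≤ Δ. -/

import Mathlib

open SimpleGraph

/-- A measurement path in `G`: a walk together with its two endpoints. -/
abbrev MWalk {V : Type*} (G : SimpleGraph V) := Σ u : V, Σ v : V, G.Walk u v

/-- A measurement path traverses a node `x` iff `x` lies on the walk. -/
def Traverses {V : Type*} {G : SimpleGraph V} (p : MWalk G) (x : V) : Prop :=
  x ∈ p.2.2.support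

/-- Two failure sets `F`, `F'` are distinguishable w.r.t. the collection `P` of
measurement paths: some path of `P` traverses a node of one set but no node of
the other. -/
def Distinguishable {V : Type*} {G : SimpleGraph V} (P : Set (MWalk G))
    (F F' : Set V) : Prop :=
  (∃ p ∈ P, (∃ x ∈ F, Traverses p x) ∧ ∀ x ∈ F', ¬ Traverses p x) ∨
  (∃ p ∈ P, (∃ x ∈ F', Traverses p x) ∧ ∀ x ∈ F, ¬ Traverses p x)

/-- `k`-identifiability w.r.t. paths `P`, where failure sets range over subsets
of the non-monitor set `Nm`. -/
def Identifiable {V : Type*} {G : SimpleGraph V} (P : Set (MWalk G))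
    (Nm : Set V) (k : ℕ) : Prop :=
  ∀ F F' : Set V, F ⊆ Nm → F' ⊆ Nm → F.ncard ≤ k → F'.ncard ≤ k → F ≠ F' →
    Distinguishable P F F'

/-- CAP measurement paths: all walks whose two endpoints are monitors
(endpoints may coincide, nodes may be revisited). -/
def CAP {V : Type*} (G : SimpleGraph V) (M : Set V) : Set (MWalk G) :=
  { p | p.1 ∈ M ∧ p.2.1 ∈ M }

/-- CSP measurement paths: all simple (cycle-free) paths whose two endpoints
are distinct monitors. -/
def CSP {V : Type*} (G : SimpleGraph V) (M : Set V) : Set (MWalk G) :=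
  { p | p.1 ∈ M ∧ p.2.1 ∈ M ∧ p.1 ≠ p.2.1 ∧ p.2.2.IsPath }

/-- Every connected component of `G − V'` contains at least one monitor. -/
def ComponentsHaveMonitor {V : Type*} (G : SimpleGraph V) (M : Set V)
    (V' : Set V) : Prop :=
  ∀ v : ↥(V'ᶜ), ∃ m : ↥(V'ᶜ), (m : V) ∈ M ∧ (G.induce V'ᶜ).Reachable v m

/-- The auxiliary graph on the non-monitors `Nm` plus a new virtual monitor
`m'` (the vertex `none`), where the monitors in `M'` are used to create the
virtual links: edges of `G` between non-monitors are kept; `m'` is joined to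
each non-monitor adjacent in `G` to some monitor in `M'`; and two non-monitors
each adjacent in `G` to some monitor in `M'` are joined.
`G* = StarGraph G Mᶜ M` and `G_m = StarGraph G Mᶜ (M \ {m})`. -/
def StarGraph {V : Type*} (G : SimpleGraph V) (Nm M' : Set V) :
    SimpleGraph (Option ↥Nm) where
  Adj x y :=
    match x, y with
    | none, none => False
    | none, some u => ∃ m ∈ M', G.Adj (u : V) m
    | some u, none => ∃ m ∈ M', G.Adj (u : V) m
    | some u, some w => (u : V) ≠ (w : V) ∧
        (G.Adj (u : V) (w : V) ∨
          ((∃ m ∈ M', G.Adj (u : V) m) ∧ ∃ m ∈ M', G.Adj (w : V) m))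
  symm := by
    refine ⟨?_⟩
    rintro (_ | u) (_ | w) h
    · exact h
    · exact h
    · exact h
    · exact ⟨fun e => h.1 e.symm, h.2.imp (fun hh => hh.symm) fun hh => ⟨hh.2, hh.1⟩⟩
  loopless := by
    refine ⟨?_⟩
    rintro (_ | u) h
    · exact h
    · exact h.1 rfl

/-- A graph `H` is `k`-vertex-connected: it has more than `k` vertices and
removing fewer than `k` vertices leaves it connected. -/
def KConnected {W : Type*} (H : SimpleGraph W) (k : ℕ) : Prop :=
  k < Nat.card W ∧ ∀ S : Set W, S.ncard < k → (H.induce Sᶜ).Connected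

/-- The vertex connectivity `δ(H)`: the largest `k` such that `H` is
`k`-vertex-connected. -/
noncomputable def vertexConnectivity {W : Type*} (H : SimpleGraph W) : ℕ :=
  sSup { k | KConnected H k }

/-- The maximum identifiability: the largest `k ∈ {0, …, |Nm|}` such that the
network is `k`-identifiable w.r.t. `P`. -/
noncomputable def maxIdent {V : Type*} {G : SimpleGraph V} (P : Set (MWalk G))
    (Nm : Set V) : ℕ :=
  sSup { k | k ≤ Nm.ncard ∧ Identifiable P Nm k }

/-- `MSC(v)`: the minimum cardinality of a set `V' ⊆ Nm \ {v}` of non-monitors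
such that every path of `P` traversing `v` traverses some node of `V'`
(`⊤ = ∞` if no such set exists). -/
noncomputable def MSC {V : Type*} {G : SimpleGraph V} (P : Set (MWalk G))
    (Nm : Set V) (v : V) : ℕ∞ :=
  sInf { n : ℕ∞ | ∃ V' : Set V, V' ⊆ Nm \ {v} ∧
    (∀ p ∈ P, Traverses p v → ∃ x ∈ V', Traverses p x) ∧ n = (V'.ncard : ℕ∞) }

/-!
If `v` attains `Δ = MSC(v)` with an optimal cover `V'`, then `V' ∪ {v}` and `V'` fail exactly
the same paths, and both have at most `Δ + 1` elements; so no `k > Δ` is identifiable.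
Conversely, if `F ≠ F'` have at most `Δ - 1` elements, pick `w ∈ F \ F'` (say): `F'` is too
small to cover `w`, so some path through `w` avoids `F'` and distinguishes the two sets.
-/

theorem ENat.sInf_mem_of_ne_top {s : Set ℕ∞} (h : sInf s ≠ ⊤) : sInf s ∈ s :=
  csInf_mem <| Set.nonempty_iff_ne_empty.mpr fun hs => h (hs ▸ sInf_empty)

section Identifiability

variable {V : Type*} {G : SimpleGraph V} {P : Set (MWalk G)} {Nm : Set V} {v : V}

theorem Distinguishable.symm {F F' : Set V} (h : Distinguishable P F F') :
    Distinguishable P F' F :=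
  Or.symm h

theorem MSC_le_ncard {V' : Set V} (hV' : V' ⊆ Nm \ {v})
    (hcover : ∀ p ∈ P, Traverses p v → ∃ x ∈ V', Traverses p x) :
    MSC P Nm v ≤ V'.ncard :=
  sInf_le ⟨V', hV', hcover, rfl⟩

theorem exists_cover_of_MSC_ne_top (h : MSC P Nm v ≠ ⊤) :
    ∃ V' ⊆ Nm \ {v}, (∀ p ∈ P, Traverses p v → ∃ x ∈ V', Traverses p x) ∧
      (V'.ncard : ℕ∞) = MSC P Nm v := by
  obtain ⟨V', hV', hcover, hcard⟩ := ENat.sInf_mem_of_ne_top h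
  exact ⟨V', hV', hcover, hcard.symm⟩

theorem not_distinguishable_insert_of_cover {V' : Set V}
    (hcover : ∀ p ∈ P, Traverses p v → ∃ x ∈ V', Traverses p x) :
    ¬ Distinguishable P (insert v V') V' := by
  rintro (⟨p, hp, ⟨x, hx | hx, hpx⟩, havoid⟩ | ⟨p, _, ⟨x, hx, hpx⟩, havoid⟩)
  · subst hx
    obtain ⟨y, hy, hpy⟩ := hcover p hp hpx
    exact havoid y hy hpy
  · exact havoid x hx hpx
  · exact havoid x (Set.mem_insert_of_mem v hx) hpx

theorem Identifiable.le_MSC [Finite V] {k : ℕ} (hk : Identifiable P Nm k) (hv : v ∈ Nm) :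
    (k : ℕ∞) ≤ MSC P Nm v := by
  by_cases htop : MSC P Nm v = ⊤
  · exact htop ▸ le_top
  obtain ⟨V', hV', hcover, hcard⟩ := exists_cover_of_MSC_ne_top htop
  rw [← hcard, Nat.cast_le]
  by_contra! hlt
  have hvV' : v ∉ V' := fun h => (hV' h).2 rfl
  have hV'Nm : V' ⊆ Nm := hV'.trans Set.sdiff_subset
  refine not_distinguishable_insert_of_cover hcover <| hk _ _ (Set.insert_subset hv hV'Nm) hV'Nm
    ?_ hlt.le fun h => hvV' (h ▸ Set.mem_insert v V')
  rw [Set.ncard_insert_of_notMem hvV']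
  exact hlt

theorem distinguishable_of_mem_of_notMem {F F' : Set V} {w : V} (hwF : w ∈ F) (hwF' : w ∉ F')
    (hF' : F' ⊆ Nm) (hcard : (F'.ncard : ℕ∞) < MSC P Nm w) :
    Distinguishable P F F' := by
  by_contra hnd
  refine (MSC_le_ncard (Set.subset_sdiff_singleton hF' hwF') fun p hp hpw => ?_).not_gt hcard
  by_contra! havoid
  exact hnd (Or.inl ⟨p, hp, ⟨w, hwF, hpw⟩, havoid⟩)

theorem identifiable_of_lt_MSC {k : ℕ} (hk : ∀ w ∈ Nm, (k : ℕ∞) < MSC P Nm w) :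
    Identifiable P Nm k := by
  intro F F' hF hF' hcardF hcardF' hne
  have hlt {A : Set V} {w : V} (hA : A.ncard ≤ k) (hw : w ∈ Nm) : (A.ncard : ℕ∞) < MSC P Nm w :=
    lt_of_le_of_lt (Nat.cast_le.mpr hA) (hk w hw)
  by_cases hsub : F ⊆ F'
  · obtain ⟨w, hwF', hwF⟩ := Set.not_subset.mp fun h => hne (hsub.antisymm h)
    exact (distinguishable_of_mem_of_notMem hwF' hwF hF (hlt hcardF (hF' hwF'))).symm
  · obtain ⟨w, hwF, hwF'⟩ := Set.not_subset.mp hsub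
    exact distinguishable_of_mem_of_notMem hwF hwF' hF' (hlt hcardF' (hF hwF))

theorem maxIdent_le_MSC [Finite V] (hv : v ∈ Nm) : (maxIdent P Nm : ℕ∞) ≤ MSC P Nm v := by
  by_cases htop : MSC P Nm v = ⊤
  · exact htop ▸ le_top
  lift MSC P Nm v to ℕ using htop with m hm
  refine Nat.cast_le.mpr <| csSup_le' fun k hk => ?_
  have hkm := hk.2.le_MSC hv
  rw [← hm, Nat.cast_le] at hkm
  exact hkm

theorem le_maxIdent {k : ℕ} (hkNm : k ≤ Nm.ncard) (hk : Identifiable P Nm k) :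
    k ≤ maxIdent P Nm :=
  le_csSup ⟨Nm.ncard, fun _ h => h.1⟩ ⟨hkNm, hk⟩

theorem MSC_le_ncard_of_ne_top [Finite V] (h : MSC P Nm v ≠ ⊤) : MSC P Nm v ≤ Nm.ncard := by
  obtain ⟨V', hV', -, hcard⟩ := exists_cover_of_MSC_ne_top h
  rw [← hcard, Nat.cast_le]
  exact Set.ncard_le_ncard (hV'.trans Set.sdiff_subset)

end Identifiability

theorem stmt_19_general {V : Type*} [Fintype V] (G : SimpleGraph V)
    (M : Set V) (P : Set (MWalk G)) (Δ : ℕ∞)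
    (hΔdef : Δ = sInf { n : ℕ∞ | ∃ v ∈ Mᶜ, n = MSC P Mᶜ v }) (hΔ : Δ ≠ ⊤) :
    Δ - 1 ≤ (maxIdent P Mᶜ : ℕ∞) ∧ (maxIdent P Mᶜ : ℕ∞) ≤ Δ := by
  obtain ⟨v, hv, hvΔ⟩ := hΔdef ▸ ENat.sInf_mem_of_ne_top (hΔdef ▸ hΔ)
  have hΔle (w : V) (hw : w ∈ Mᶜ) : Δ ≤ MSC P Mᶜ w := hΔdef ▸ sInf_le ⟨w, hw, rfl⟩
  refine ⟨?_, hvΔ ▸ maxIdent_le_MSC hv⟩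
  have hΔNm : Δ ≤ Mᶜ.ncard := hvΔ ▸ MSC_le_ncard_of_ne_top (hvΔ ▸ hΔ)
  lift Δ to ℕ using hΔ with d
  rw [Nat.cast_le] at hΔNm
  rcases Nat.eq_zero_or_pos d with rfl | hd
  · simp
  have hid : Identifiable P Mᶜ (d - 1) := identifiable_of_lt_MSC fun w hw =>
    lt_of_lt_of_le (Nat.cast_lt.mpr (Nat.sub_lt hd one_pos)) (hΔle w hw)
  exact_mod_cast le_maxIdent (by omega) hid

/-- Maximum identifiability under UP: with `Δ = min_{v ∈ N} MSC(v)` finite,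
`Δ − 1 ≤ Ω_UP(G) ≤ Δ`. -/
theorem stmt_19 {V : Type*} [Fintype V] (G : SimpleGraph V) (hG : G.Connected)
    (M : Set V) (hM : M.Nonempty) (P : Set (MWalk G))
    (hP : ∀ p ∈ P, p.1 ∈ M ∧ p.2.1 ∈ M ∧ p.2.2.IsPath) (Δ : ℕ∞)
    (hΔdef : Δ = sInf { n : ℕ∞ | ∃ v ∈ Mᶜ, n = MSC P Mᶜ v }) (hΔ : Δ ≠ ⊤) :
    Δ - 1 ≤ (maxIdent P Mᶜ : ℕ∞) ∧ (maxIdent P Mᶜ : ℕ∞) ≤ Δ :=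
  stmt_19_general G M P Δ hΔdef hΔ
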